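/- Let u ≥ 0 and let 0 ≤ ρ₁ ≤ ρ₂ < 1. Then ∫_{ℝ²} (x−u)⁺·(y−u)⁺ · f_{ρ₁}(x,y) dx dy ≤ ∫_{ℝ²} (x−u)⁺·(y−u)⁺ · f_{ρ₂}(x,y) dx dy; i.e. the covariance 𝒢 of the excess damage function of a standard bivariate normal pair is non-decreasing in the correlation on [0,1). -/

import Mathlib

open MeasureTheory

/-- Density of the standard bivariate normal distribution with correlation `ρ`. -/
noncomputable def bvnPDF (ρ x y : ℝ) : ℝ :=
  (2 * Real.pi * Real.sqrt (1 - ρ ^ 2))⁻¹ *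
    Real.exp (-(x ^ 2 - 2 * ρ * x * y + y ^ 2) / (2 * (1 - ρ ^ 2)))

/-!
Let `P_ρ = mehler ρ` be the Mehler (Ornstein–Uhlenbeck) operator,
`P_ρ h (x) = 𝔼 h(ρx + √(1-ρ²) Z)`. Factoring the bivariate density as `φ(x) · φ_{ρx, 1-ρ²}(y)`
turns the integral into `⟨f, P_ρ f⟩` in `L²(γ)`, `γ` the standard Gaussian, with `f = (· - u)⁺`.
Since a Gaussian mixture of Gaussians is Gaussian, `P_a P_b = P_{ab}` and `P_c` preserves `γ`;
the bivariate density is symmetric, so `P_ρ` is self-adjoint; and by Jensen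
`(P_c g)² ≤ P_c (g²)`, so `P_c` is an `L²(γ)` contraction. Hence `⟨f, P_ρ f⟩ = ‖P_{√ρ} f‖²`, and
for `ρ₁ ≤ ρ₂` we have `P_{√ρ₁} f = P_c P_{√ρ₂} f` with `c = √(ρ₁/ρ₂) ≤ 1`, which gives the
inequality. Working with `ℝ≥0∞`-valued integrals lets Tonelli do all the interchanges; finiteness
(`f` has a Gaussian second moment) is only needed to return to real integrals.
-/

open ProbabilityTheory
open scoped ENNReal NNReal

noncomputable def mehler (ρ : ℝ) (h : ℝ → ℝ≥0∞) (x : ℝ) : ℝ≥0∞ :=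
  ∫⁻ y, h y ∂gaussianReal (ρ * x) (1 - ρ ^ 2).toNNReal

lemma sq_lintegral_le_lintegral_sq {α : Type*} [MeasurableSpace α] {μ : Measure α}
    [IsProbabilityMeasure μ] {f : α → ℝ≥0∞} (hf : AEMeasurable f μ) :
    (∫⁻ a, f a ∂μ) ^ 2 ≤ ∫⁻ a, f a ^ 2 ∂μ := by
  have holder := ENNReal.lintegral_mul_norm_pow_le (hf.pow_const 2)
    (aemeasurable_const (b := (1 : ℝ≥0∞)))
    (by norm_num : (0 : ℝ) ≤ 1 / 2) (by norm_num : (0 : ℝ) ≤ 1 / 2) (by norm_num)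
  have hsqrt (x : ℝ≥0∞) : (x ^ 2) ^ (1 / 2 : ℝ) = x := by
    rw [← ENNReal.rpow_natCast, ← ENNReal.rpow_mul]; norm_num
  simp only [hsqrt, lintegral_const, measure_univ, ENNReal.one_rpow, mul_one] at holder
  calc (∫⁻ a, f a ∂μ) ^ 2 ≤ ((∫⁻ a, f a ^ 2 ∂μ) ^ (1 / 2 : ℝ)) ^ 2 := by gcongr
    _ = ∫⁻ a, f a ^ 2 ∂μ := by
      rw [← ENNReal.rpow_natCast, ← ENNReal.rpow_mul]; norm_num

variable {h : ℝ → ℝ≥0∞}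

@[fun_prop]
lemma measurable_mehler (hh : Measurable h) (ρ : ℝ) : Measurable (mehler ρ h) :=
  (Measure.measurable_lintegral hh).comp (by fun_prop)

lemma gaussianReal_eq_map_const_add (m : ℝ) (v : ℝ≥0) :
    gaussianReal m v = (gaussianReal 0 v).map (m + ·) := by
  rw [gaussianReal_map_const_add, zero_add]

lemma lintegral_gaussianReal_mixture (hh : Measurable h) (c m : ℝ) (v w : ℝ≥0) :
    ∫⁻ x, ∫⁻ y, h y ∂gaussianReal (c * x) v ∂gaussianReal m w
      = ∫⁻ y, h y ∂gaussianReal (c * m) (.mk (c ^ 2) (sq_nonneg c) * w + v) := by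
  have hshift (x : ℝ) :
      ∫⁻ y, h y ∂gaussianReal (c * x) v = ∫⁻ z, h (c * x + z) ∂gaussianReal 0 v := by
    rw [gaussianReal_eq_map_const_add, lintegral_map hh (by fun_prop)]
  simp_rw [hshift]
  rw [← lintegral_map (f := fun x => ∫⁻ z, h (x + z) ∂gaussianReal 0 v)
    (Measurable.lintegral_prod_right' (hh.comp measurable_add)) (by fun_prop),
    gaussianReal_map_const_mul, ← Measure.lintegral_conv hh, gaussianReal_conv_gaussianReal,
    add_zero]

lemma mehler_mehler (hh : Measurable h) {a b : ℝ} (ha : a ^ 2 ≤ 1) (hb : b ^ 2 ≤ 1) :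
    mehler a (mehler b h) = mehler (a * b) h := by
  ext x
  simp only [mehler]
  rw [lintegral_gaussianReal_mixture hh]
  congr 2
  · ring
  · ext
    simp only [NNReal.coe_add, NNReal.coe_mul, NNReal.coe_mk,
      Real.coe_toNNReal _ (sub_nonneg.2 ha), Real.coe_toNNReal _ (sub_nonneg.2 hb),
      Real.coe_toNNReal _ (sub_nonneg.2 (show (a * b) ^ 2 ≤ 1 by rw [mul_pow]; nlinarith))]
    ring

lemma lintegral_mehler (hh : Measurable h) {ρ : ℝ} (hρ : ρ ^ 2 ≤ 1) :
    ∫⁻ x, mehler ρ h x ∂gaussianReal 0 1 = ∫⁻ x, h x ∂gaussianReal 0 1 := by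
  unfold mehler
  rw [lintegral_gaussianReal_mixture hh]
  congr 2
  · ring
  · ext
    simp [Real.coe_toNNReal _ (sub_nonneg.2 hρ)]

lemma bvnPDF_comm (ρ x y : ℝ) : bvnPDF ρ x y = bvnPDF ρ y x := by
  unfold bvnPDF
  ring_nf

lemma bvnPDF_eq_gaussianPDFReal_mul {ρ : ℝ} (hρ : ρ ^ 2 < 1) (x y : ℝ) :
    bvnPDF ρ x y = gaussianPDFReal 0 1 x * gaussianPDFReal (ρ * x) (1 - ρ ^ 2).toNNReal y := by
  have hσ : 0 < 1 - ρ ^ 2 := sub_pos.2 hρ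
  simp only [bvnPDF, gaussianPDFReal, Real.coe_toNNReal _ hσ.le, NNReal.coe_one, mul_one, sub_zero]
  rw [mul_mul_mul_comm, ← Real.exp_add, ← mul_inv, ← Real.sqrt_mul (by positivity),
    show 2 * Real.pi * (2 * Real.pi * (1 - ρ ^ 2)) = (2 * Real.pi) ^ 2 * (1 - ρ ^ 2) by ring,
    Real.sqrt_mul (by positivity), Real.sqrt_sq (by positivity)]
  congr 2
  field_simp
  ring

lemma lintegral_mul_mehler {g : ℝ → ℝ≥0∞} (hg : Measurable g) (hh : Measurable h) {ρ : ℝ}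
    (hρ : ρ ^ 2 < 1) :
    ∫⁻ x, g x * mehler ρ h x ∂gaussianReal 0 1
      = ∫⁻ x, ∫⁻ y, g x * h y * ENNReal.ofReal (bvnPDF ρ x y) := by
  have hv : (1 - ρ ^ 2).toNNReal ≠ 0 := by simpa using hρ
  rw [gaussianReal_of_var_ne_zero _ one_ne_zero,
    lintegral_withDensity_eq_lintegral_mul _ (measurable_gaussianPDF 0 1) (by fun_prop)]
  refine lintegral_congr fun x => ?_
  simp only [mehler, gaussianReal_of_var_ne_zero _ hv, Pi.mul_apply,
    lintegral_withDensity_eq_lintegral_mul _ (measurable_gaussianPDF _ _) hh]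
  rw [← lintegral_const_mul _ (by fun_prop), ← lintegral_const_mul _ (by fun_prop)]
  refine lintegral_congr fun y => ?_
  simp only [bvnPDF_eq_gaussianPDFReal_mul hρ, gaussianPDF,
    ENNReal.ofReal_mul (gaussianPDFReal_nonneg _ _ _)]
  ring

lemma lintegral_mul_mehler_comm {g : ℝ → ℝ≥0∞} (hg : Measurable g) (hh : Measurable h) {ρ : ℝ}
    (hρ : ρ ^ 2 < 1) :
    ∫⁻ x, g x * mehler ρ h x ∂gaussianReal 0 1 = ∫⁻ x, mehler ρ g x * h x ∂gaussianReal 0 1 := by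
  calc ∫⁻ x, g x * mehler ρ h x ∂gaussianReal 0 1
      = ∫⁻ x, ∫⁻ y, g x * h y * ENNReal.ofReal (bvnPDF ρ x y) := lintegral_mul_mehler hg hh hρ
    _ = ∫⁻ y, ∫⁻ x, g x * h y * ENNReal.ofReal (bvnPDF ρ x y) :=
      lintegral_lintegral_swap (by unfold bvnPDF; fun_prop)
    _ = ∫⁻ x, h x * mehler ρ g x ∂gaussianReal 0 1 := by
      rw [lintegral_mul_mehler hh hg hρ]
      refine lintegral_congr fun y => lintegral_congr fun x => ?_
      rw [bvnPDF_comm, mul_comm (g x)]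
    _ = ∫⁻ x, mehler ρ g x * h x ∂gaussianReal 0 1 :=
      lintegral_congr fun x => mul_comm _ _

lemma mehler_sq_le (hh : Measurable h) (ρ x : ℝ) :
    mehler ρ h x ^ 2 ≤ mehler ρ (fun y => h y ^ 2) x :=
  sq_lintegral_le_lintegral_sq hh.aemeasurable

lemma lintegral_sq_mehler_le (hh : Measurable h) {ρ : ℝ} (hρ : ρ ^ 2 ≤ 1) :
    ∫⁻ x, mehler ρ h x ^ 2 ∂gaussianReal 0 1 ≤ ∫⁻ x, h x ^ 2 ∂gaussianReal 0 1 :=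
  (lintegral_mono fun x => mehler_sq_le hh ρ x).trans_eq (lintegral_mehler (hh.pow_const 2) hρ)

lemma lintegral_mul_mehler_eq_lintegral_sq (hh : Measurable h) {ρ : ℝ} (hρ₀ : 0 ≤ ρ)
    (hρ₁ : ρ < 1) :
    ∫⁻ x, h x * mehler ρ h x ∂gaussianReal 0 1 = ∫⁻ x, mehler √ρ h x ^ 2 ∂gaussianReal 0 1 := by
  have hsq : √ρ ^ 2 = ρ := Real.sq_sqrt hρ₀
  have hsplit : mehler ρ h = mehler √ρ (mehler √ρ h) := by
    rw [mehler_mehler hh (by rw [hsq]; exact hρ₁.le) (by rw [hsq]; exact hρ₁.le),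
      Real.mul_self_sqrt hρ₀]
  rw [hsplit, lintegral_mul_mehler_comm hh (measurable_mehler hh _) (by rw [hsq]; exact hρ₁)]
  simp_rw [sq]

lemma lintegral_mul_mehler_le_lintegral_sq (hh : Measurable h) {ρ : ℝ} (hρ₀ : 0 ≤ ρ)
    (hρ₁ : ρ < 1) :
    ∫⁻ x, h x * mehler ρ h x ∂gaussianReal 0 1 ≤ ∫⁻ x, h x ^ 2 ∂gaussianReal 0 1 := by
  rw [lintegral_mul_mehler_eq_lintegral_sq hh hρ₀ hρ₁]
  exact lintegral_sq_mehler_le hh (by rw [Real.sq_sqrt hρ₀]; exact hρ₁.le)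

lemma lintegral_mul_mehler_mono (hh : Measurable h) {ρ₁ ρ₂ : ℝ} (h₁ : 0 ≤ ρ₁) (h₂ : ρ₁ ≤ ρ₂)
    (h₃ : ρ₂ < 1) :
    ∫⁻ x, h x * mehler ρ₁ h x ∂gaussianReal 0 1 ≤ ∫⁻ x, h x * mehler ρ₂ h x ∂gaussianReal 0 1 := by
  have hc : √(ρ₁ / ρ₂) * √ρ₂ = √ρ₁ := by
    rcases (h₁.trans h₂).eq_or_lt with hρ₂ | hρ₂
    · simp [← hρ₂, le_antisymm (hρ₂ ▸ h₂) h₁]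
    · rw [← Real.sqrt_mul (div_nonneg h₁ hρ₂.le), div_mul_cancel₀ _ hρ₂.ne']
  have hc₁ : √(ρ₁ / ρ₂) ^ 2 ≤ 1 := by
    rw [Real.sq_sqrt (div_nonneg h₁ (h₁.trans h₂))]
    exact div_le_one_of_le₀ h₂ (h₁.trans h₂)
  rw [lintegral_mul_mehler_eq_lintegral_sq hh h₁ (h₂.trans_lt h₃),
    lintegral_mul_mehler_eq_lintegral_sq hh (h₁.trans h₂) h₃, ← hc,
    ← mehler_mehler hh hc₁ (by rw [Real.sq_sqrt (h₁.trans h₂)]; exact h₃.le)]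
  exact lintegral_sq_mehler_le (measurable_mehler hh _) hc₁

lemma bvnPDF_nonneg (ρ x y : ℝ) : 0 ≤ bvnPDF ρ x y := by
  unfold bvnPDF
  positivity

lemma integral_mul_bvnPDF {f g : ℝ → ℝ} (hf : Measurable f) (hg : Measurable g) (hf₀ : 0 ≤ f)
    (hg₀ : 0 ≤ g) {ρ : ℝ} (hρ : ρ ^ 2 < 1) :
    ∫ p : ℝ × ℝ, f p.1 * g p.2 * bvnPDF ρ p.1 p.2
      = (∫⁻ x, ENNReal.ofReal (f x) * mehler ρ (fun y => ENNReal.ofReal (g y)) x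
          ∂gaussianReal 0 1).toReal := by
  have hF : Measurable fun p : ℝ × ℝ => f p.1 * g p.2 * bvnPDF ρ p.1 p.2 := by
    unfold bvnPDF
    fun_prop
  rw [integral_eq_lintegral_of_nonneg_ae
      (ae_of_all _ fun p => mul_nonneg (mul_nonneg (hf₀ _) (hg₀ _)) (bvnPDF_nonneg _ _ _))
      hF.aestronglyMeasurable,
    lintegral_mul_mehler (by fun_prop) (by fun_prop) hρ, Measure.volume_eq_prod,
    lintegral_prod _ hF.ennreal_ofReal.aemeasurable]
  simp_rw [ENNReal.ofReal_mul (mul_nonneg (hf₀ _) (hg₀ _)), ENNReal.ofReal_mul (hf₀ _)]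

lemma lintegral_sq_max_sub_lt_top (u m : ℝ) (v : ℝ≥0) :
    ∫⁻ x, ENNReal.ofReal (max (x - u) 0) ^ 2 ∂gaussianReal m v < ∞ := by
  have hsq : Integrable (fun x => (x - u) ^ 2) (gaussianReal m v) :=
    ((memLp_id_gaussianReal 2).sub (memLp_const u)).integrable_sq
  refine lt_of_le_of_lt (lintegral_mono fun x => ?_) hsq.lintegral_lt_top
  rw [← ENNReal.ofReal_pow (le_max_right _ _)]
  refine ENNReal.ofReal_le_ofReal ?_
  rcases le_total (x - u) 0 with h | h
  · simpa [max_eq_right h] using sq_nonneg (x - u)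
  · rw [max_eq_left h]

theorem stmt_15_general (u ρ₁ ρ₂ : ℝ)
    (h₁ : 0 ≤ ρ₁) (h₂ : ρ₁ ≤ ρ₂) (h₃ : ρ₂ < 1) :
    (∫ p : ℝ × ℝ, max (p.1 - u) 0 * max (p.2 - u) 0 * bvnPDF ρ₁ p.1 p.2)
      ≤ ∫ p : ℝ × ℝ, max (p.1 - u) 0 * max (p.2 - u) 0 * bvnPDF ρ₂ p.1 p.2 := by
  have hf : Measurable fun x : ℝ => max (x - u) 0 := by fun_prop
  have hf₀ : 0 ≤ fun x : ℝ => max (x - u) 0 := fun x => le_max_right _ _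
  have hsq {ρ : ℝ} (hρ₀ : 0 ≤ ρ) (hρ₁ : ρ < 1) : ρ ^ 2 < 1 := by nlinarith
  rw [integral_mul_bvnPDF hf hf hf₀ hf₀ (hsq h₁ (h₂.trans_lt h₃)),
    integral_mul_bvnPDF hf hf hf₀ hf₀ (hsq (h₁.trans h₂) h₃)]
  refine ENNReal.toReal_mono ?_ (lintegral_mul_mehler_mono (by fun_prop) h₁ h₂ h₃)
  exact ((lintegral_mul_mehler_le_lintegral_sq (by fun_prop) (h₁.trans h₂) h₃).trans_lt
    (lintegral_sq_max_sub_lt_top u 0 1)).ne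

/-- `E[(X-u)⁺ (Y-u)⁺]` for a standard bivariate normal pair is non-decreasing in the
correlation on `[0,1)`. -/
theorem stmt_15 (u ρ₁ ρ₂ : ℝ) (hu : 0 ≤ u)
    (h₁ : 0 ≤ ρ₁) (h₂ : ρ₁ ≤ ρ₂) (h₃ : ρ₂ < 1) :
    (∫ p : ℝ × ℝ, max (p.1 - u) 0 * max (p.2 - u) 0 * bvnPDF ρ₁ p.1 p.2)
      ≤ ∫ p : ℝ × ℝ, max (p.1 - u) 0 * max (p.2 - u) 0 * bvnPDF ρ₂ p.1 p.2 :=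
  stmt_15_general u ρ₁ ρ₂ h₁ h₂ h₃
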